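/- Let T be a pq-tree over a finite set U with weights w : U → ℤ, and let v be a p-node of T with children c_1, …, c_ℓ. For a node c define g(c) = border(c) − max(total(c), 0), and let b = max_{1 ≤ i ≤ ℓ} g(c_i). Then border(v) = b + Σ_{i=1}^{ℓ} max(total(c_i), 0). -/

import Mathlib

/-- A pq-tree: leaves carry elements of `U`; the children of each internal node
(a p-node or a q-node) are given as a sequence. -/
inductive PQTree (U : Type) : Type where
  | leaf : U → PQTree U
  | pnode : List (PQTree U) → PQTree U
  | qnode : List (PQTree U) → PQTree U

namespace PQTree

variable {U : Type}

/-- The list of leaves below a node, read left to right in the given order. -/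
def leaves : PQTree U → List U
  | leaf u => [u]
  | pnode cs => cs.attach.flatMap (fun c => leaves c.1)
  | qnode cs => cs.attach.flatMap (fun c => leaves c.1)
  decreasing_by
  · have := List.sizeOf_lt_of_mem c.2; simp; omega
  · have := List.sizeOf_lt_of_mem c.2; simp; omega

/-- `total(v) = Σ_{u ∈ leaves(v)} w(u)`. -/
def total (w : U → ℤ) (t : PQTree U) : ℤ :=
  ((leaves t).map w).sum

/-- `IsFrontier t l` holds when `l` is a frontier order of the pq-tree `t`: a linear order
of its leaves obtained by reading the leaves left to right after independently permuting
the children sequence of each p-node arbitrarily and either keeping or reversing the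
children sequence of each q-node. -/
inductive IsFrontier : PQTree U → List U → Prop where
  | leaf (u : U) : IsFrontier (leaf u) [u]
  | pnode (cs cs' : List (PQTree U)) (fs : List (List U)) :
      cs'.Perm cs → List.Forall₂ IsFrontier cs' fs →
      IsFrontier (pnode cs) fs.flatten
  | qnodeKeep (cs : List (PQTree U)) (fs : List (List U)) :
      List.Forall₂ IsFrontier cs fs →
      IsFrontier (qnode cs) fs.flatten
  | qnodeRev (cs : List (PQTree U)) (fs : List (List U)) :
      List.Forall₂ IsFrontier cs.reverse fs →
      IsFrontier (qnode cs) fs.flatten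

variable [DecidableEq U]

/-- `S` is compatible with the pq-tree `t`: some frontier order of `t` has a contiguous
segment whose elements are exactly `S` (in particular `S = ∅` is compatible). -/
def Compatible (S : Finset U) (t : PQTree U) : Prop :=
  ∃ l l₁ l₂ l₃ : List U, IsFrontier t l ∧ l = l₁ ++ l₂ ++ l₃ ∧ l₂.toFinset = S

/-- `S` is border-compatible with the pq-tree `t`: `S` is nonempty and in some frontier
order of `t` the elements of `S` occupy a set of consecutive positions containing the
first or the last position, i.e. `S` is a prefix or a suffix of the frontier. -/
def BorderCompatible (S : Finset U) (t : PQTree U) : Prop :=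
  S.Nonempty ∧ ∃ l l₁ l₂ : List U, IsFrontier t l ∧ l = l₁ ++ l₂ ∧
    (l₁.toFinset = S ∨ l₂.toFinset = S)

/-- `inner(v)`: the maximum of `Σ_{u∈S} w(u)` over all sets `S` compatible with the
subtree at `v` (including `S = ∅`, so `inner(v) ≥ 0`). -/
noncomputable def inner (w : U → ℤ) (t : PQTree U) : ℤ :=
  sSup {z : ℤ | ∃ S : Finset U, Compatible S t ∧ z = ∑ u ∈ S, w u}

/-- `border(v)`: the maximum of `Σ_{u∈S} w(u)` over all (nonempty) sets `S`
border-compatible with the subtree at `v`. -/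
noncomputable def border (w : U → ℤ) (t : PQTree U) : ℤ :=
  sSup {z : ℤ | ∃ S : Finset U, BorderCompatible S t ∧ z = ∑ u ∈ S, w u}

/-- A well-formed pq-tree: every internal node has a nonempty sequence of children
(so every subtree has at least one leaf). -/
inductive Proper : PQTree U → Prop where
  | leaf (u : U) : Proper (leaf u)
  | pnode (cs : List (PQTree U)) : cs ≠ [] → (∀ c ∈ cs, Proper c) → Proper (pnode cs)
  | qnode (cs : List (PQTree U)) : cs ≠ [] → (∀ c ∈ cs, Proper c) → Proper (qnode cs)

end PQTree

/-! A nonempty prefix of a frontier of a p-node `v` consists of the frontiers of some children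
followed by a nonempty prefix of the frontier of one further child `d`. Its weight is therefore at
most `Σ total(c) + border(d) ≤ g(d) + Σ_i max(total(c_i), 0)`, the sum running over the children
placed before `d`. Conversely, listing first the children of nonnegative total, then `d` with an
optimal border set as prefix of its frontier, then the remaining children, realises
`g(d) + Σ_i max(total(c_i), 0)` as a prefix. Suffixes reduce to prefixes by reversing frontiers. -/

namespace PQTree

variable {U : Type}

theorem nested_induction {P : PQTree U → Prop} (t : PQTree U) (leaf : ∀ u, P (.leaf u))
    (pnode : ∀ cs, (∀ c ∈ cs, P c) → P (.pnode cs))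
    (qnode : ∀ cs, (∀ c ∈ cs, P c) → P (.qnode cs)) : P t :=
  match t with
  | .leaf u => leaf u
  | .pnode cs => pnode cs fun c _ => nested_induction c leaf pnode qnode
  | .qnode cs => qnode cs fun c _ => nested_induction c leaf pnode qnode

theorem leaves_leaf (u : U) : leaves (leaf u) = [u] := by
  simp [leaves]

theorem leaves_pnode (cs : List (PQTree U)) : leaves (pnode cs) = (cs.map leaves).flatten := by
  simp [leaves, List.flatMap_def]

theorem leaves_qnode (cs : List (PQTree U)) : leaves (qnode cs) = (cs.map leaves).flatten := by
  simp [leaves, List.flatMap_def]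

theorem _root_.List.perm_flatten_of_forall₂ {α β : Type*} {g : α → List β} {as : List α}
    {ls : List (List β)} (h : List.Forall₂ (fun a l => l.Perm (g a)) as ls) :
    ls.flatten.Perm (as.map g).flatten := by
  induction h with
  | nil => rfl
  | cons hab _ ih => exact hab.append ih

theorem _root_.List.Forall₂.imp_of_mem_left {α β : Type*} {R S : α → β → Prop}
    {l₁ : List α} {l₂ : List β} (H : ∀ a ∈ l₁, ∀ b, R a b → S a b)
    (h : List.Forall₂ R l₁ l₂) : List.Forall₂ S l₁ l₂ :=
  ((List.forall₂_and_left l₁ l₂).2 ⟨H, h⟩).imp fun _ _ h => h.1 _ h.2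

theorem _root_.List.Forall₂.exists_eq_append_cons {α β : Type*} {R : α → β → Prop}
    {l : List α} {l₁ l₂ : List β} {b : β} (h : List.Forall₂ R l (l₁ ++ b :: l₂)) :
    ∃ k₁ a k₂, l = k₁ ++ a :: k₂ ∧ List.Forall₂ R k₁ l₁ ∧ R a b := by
  obtain ⟨a, k₂, hab, -, hdrop⟩ :=
    List.forall₂_cons_right_iff.1 (List.forall₂_drop_append l l₁ _ h)
  exact ⟨l.take l₁.length, a, k₂, by rw [← hdrop, List.take_append_drop],
    List.forall₂_take_append l l₁ _ h, hab⟩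

theorem _root_.List.exists_eq_append_cons_of_append_eq_flatten {α : Type*} {l₁ l₂ : List α}
    {fs : List (List α)} (h : l₁ ++ l₂ = fs.flatten) (hne : l₁ ≠ []) :
    ∃ fs₁ p q fs₂,
      fs = fs₁ ++ (p ++ q) :: fs₂ ∧ l₁ = fs₁.flatten ++ p ∧ p ≠ [] := by
  induction fs generalizing l₁ with
  | nil => simp_all
  | cons f fs ih =>
    rw [List.flatten_cons] at h
    rcases List.append_eq_append_iff.1 h with ⟨a', hf, -⟩ | ⟨c', rfl, hc'⟩
    · exact ⟨[], l₁, a', fs, by simp [hf], by simp, hne⟩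
    · by_cases hc : c' = []
      · subst hc
        exact ⟨[], f, [], fs, by simp, by simp, by simpa using hne⟩
      · obtain ⟨fs₁, p, q, fs₂, rfl, rfl, hp⟩ := ih hc'.symm hc
        exact ⟨f :: fs₁, p, q, fs₂, by simp, by simp, hp⟩

theorem IsFrontier.perm_leaves {t : PQTree U} {l : List U} (h : IsFrontier t l) :
    l.Perm (leaves t) := by
  induction t using nested_induction generalizing l with
  | leaf u => cases h; rw [leaves_leaf]
  | pnode cs ih =>
    cases h with
    | pnode _ cs' fs hperm hfs =>
      rw [leaves_pnode]
      exact (List.perm_flatten_of_forall₂ (hfs.imp_of_mem_left fun c hc _ =>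
        ih c (hperm.subset hc))).trans (hperm.map leaves).flatten
  | qnode cs ih =>
    rw [leaves_qnode]
    cases h with
    | qnodeKeep _ fs hfs =>
      exact List.perm_flatten_of_forall₂ (hfs.imp_of_mem_left fun c hc _ => ih c hc)
    | qnodeRev _ fs hfs =>
      exact (List.perm_flatten_of_forall₂ (hfs.imp_of_mem_left fun c hc _ =>
        ih c (List.mem_reverse.1 hc))).trans (cs.reverse_perm.map leaves).flatten

theorem IsFrontier.reverse {t : PQTree U} {l : List U} (h : IsFrontier t l) :
    IsFrontier t l.reverse := by
  induction t using nested_induction generalizing l with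
  | leaf u => cases h; exact .leaf u
  | pnode cs ih =>
    cases h with
    | pnode _ cs' fs hperm hfs =>
      rw [List.reverse_flatten]
      exact .pnode cs cs'.reverse _ (cs'.reverse_perm.trans hperm)
        (List.forall₂_reverse_iff.2 (List.forall₂_map_right_iff.2
          (hfs.imp_of_mem_left fun c hc _ => ih c (hperm.subset hc))))
  | qnode cs ih =>
    cases h with
    | qnodeKeep _ fs hfs =>
      rw [List.reverse_flatten]
      exact .qnodeRev cs _ (List.forall₂_reverse_iff.2 (List.forall₂_map_right_iff.2
        (hfs.imp_of_mem_left fun c hc _ => ih c hc)))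
    | qnodeRev _ fs hfs =>
      rw [List.reverse_flatten]
      have h : List.Forall₂ (fun c f => IsFrontier c f.reverse) cs.reverse fs :=
        hfs.imp_of_mem_left fun c hc _ => ih c (List.mem_reverse.1 hc)
      rw [← List.forall₂_map_right_iff, ← List.forall₂_reverse_iff,
        List.reverse_reverse] at h
      exact .qnodeKeep cs _ h

theorem isFrontier_leaves (t : PQTree U) : IsFrontier t (leaves t) := by
  induction t using nested_induction with
  | leaf u => rw [leaves_leaf]; exact .leaf u
  | pnode cs ih =>
    rw [leaves_pnode]
    exact .pnode cs cs _ (.refl cs) (List.forall₂_map_right_iff.2 (List.forall₂_same.2 ih))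
  | qnode cs ih =>
    rw [leaves_qnode]
    exact .qnodeKeep cs _ (List.forall₂_map_right_iff.2 (List.forall₂_same.2 ih))

theorem forall₂_isFrontier_map_leaves (cs : List (PQTree U)) :
    List.Forall₂ IsFrontier cs (cs.map leaves) :=
  List.forall₂_map_right_iff.2 (List.forall₂_same.2 fun c _ => isFrontier_leaves c)

theorem sum_flatten_of_forall₂_isFrontier (w : U → ℤ) {cs : List (PQTree U)}
    {fs : List (List U)} (h : List.Forall₂ IsFrontier cs fs) :
    (fs.flatten.map w).sum = (cs.map (total w)).sum := by
  induction h with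
  | nil => rfl
  | cons hab _ ih =>
    simp only [List.flatten_cons, List.map_append, List.sum_append, List.map_cons,
      List.sum_cons, ih, total, (hab.perm_leaves.map w).sum_eq]

theorem Proper.leaves_ne_nil {t : PQTree U} (h : Proper t) : leaves t ≠ [] := by
  induction h with
  | leaf u => simp [leaves_leaf]
  | pnode cs hne _ ih | qnode cs hne _ ih =>
    obtain ⟨c, hc⟩ := List.exists_mem_of_ne_nil cs hne
    simpa [leaves_pnode, leaves_qnode] using ⟨c, hc, ih c hc⟩

theorem Proper.of_mem_pnode {cs : List (PQTree U)} {c : PQTree U} (h : Proper (PQTree.pnode cs))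
    (hc : c ∈ cs) : Proper c := by
  cases h with
  | pnode _ _ hall => exact hall c hc

section Weights

variable [DecidableEq U] (w : U → ℤ)

theorem borderCompatible_iff_exists_prefix {S : Finset U} {t : PQTree U} :
    BorderCompatible S t ↔
      S.Nonempty ∧ ∃ l₁ l₂, IsFrontier t (l₁ ++ l₂) ∧ l₁.toFinset = S := by
  constructor
  · rintro ⟨hne, l, l₁, l₂, hf, rfl, h | h⟩
    · exact ⟨hne, l₁, l₂, hf, h⟩
    · exact ⟨hne, l₂.reverse, l₁.reverse, by simpa using hf.reverse, by simpa using h⟩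
  · rintro ⟨hne, l₁, l₂, hf, h⟩
    exact ⟨hne, _, l₁, l₂, hf, rfl, Or.inl h⟩

theorem BorderCompatible.subset_leaves {S : Finset U} {t : PQTree U}
    (h : BorderCompatible S t) : S ⊆ (leaves t).toFinset := by
  obtain ⟨-, l₁, l₂, hf, rfl⟩ := borderCompatible_iff_exists_prefix.1 h
  intro u hu
  rw [List.mem_toFinset] at hu ⊢
  exact hf.perm_leaves.subset (List.mem_append_left l₂ hu)

theorem finite_setOf_borderCompatible_sum (t : PQTree U) :
    {z : ℤ | ∃ S : Finset U, BorderCompatible S t ∧ z = ∑ u ∈ S, w u}.Finite := by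
  refine ((leaves t).toFinset.powerset.image fun S => ∑ u ∈ S, w u).finite_toSet.subset ?_
  rintro _ ⟨S, hS, rfl⟩
  exact Finset.mem_coe.2 (Finset.mem_image.2 ⟨S, Finset.mem_powerset.2 hS.subset_leaves, rfl⟩)

theorem BorderCompatible.sum_le_border {S : Finset U} {t : PQTree U}
    (h : BorderCompatible S t) : ∑ u ∈ S, w u ≤ border w t :=
  le_csSup (finite_setOf_borderCompatible_sum w t).bddAbove ⟨S, h, rfl⟩

theorem exists_borderCompatible_sum_eq_border {t : PQTree U} (ht : Proper t) :
    ∃ S, BorderCompatible S t ∧ border w t = ∑ u ∈ S, w u := by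
  have hleaves : BorderCompatible (leaves t).toFinset t :=
    ⟨(List.toFinset_nonempty_iff _).2 ht.leaves_ne_nil,
      _, _, [], isFrontier_leaves t, (List.append_nil _).symm, Or.inl rfl⟩
  exact Set.Nonempty.csSup_mem
    (s := {z : ℤ | ∃ S, BorderCompatible S t ∧ z = ∑ u ∈ S, w u})
    ⟨_, _, hleaves, rfl⟩ (finite_setOf_borderCompatible_sum w t)

theorem sum_le_border_of_isFrontier_append {t : PQTree U} {p q : List U}
    (hf : IsFrontier t (p ++ q)) (hnd : p.Nodup) (hne : p ≠ []) :
    (p.map w).sum ≤ border w t := by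
  rw [← List.sum_toFinset w hnd]
  exact BorderCompatible.sum_le_border w
    ⟨(List.toFinset_nonempty_iff _).2 hne, _, p, q, hf, rfl, Or.inl rfl⟩

theorem exists_sum_prefix_le_of_isFrontier_pnode {cs : List (PQTree U)} {l₁ l₂ : List U}
    (hf : IsFrontier (pnode cs) (l₁ ++ l₂)) (hnd : (l₁ ++ l₂).Nodup) (hne : l₁ ≠ []) :
    ∃ d ∈ cs, (l₁.map w).sum ≤
      border w d - max (total w d) 0 + (cs.map fun c => max (total w c) 0).sum := by
  generalize hl : l₁ ++ l₂ = l at hf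
  cases hf with
  | pnode _ cs' fs hperm hfs =>
    obtain ⟨fs₁, p, q, fs₂, rfl, rfl, hp⟩ :=
      List.exists_eq_append_cons_of_append_eq_flatten hl hne
    obtain ⟨cs₁, d, cs₂, rfl, hfs₁, hd⟩ := hfs.exists_eq_append_cons
    refine ⟨d, hperm.subset (by simp), ?_⟩
    have hpd : (p.map w).sum ≤ border w d :=
      sum_le_border_of_isFrontier_append w hd
        (hnd.sublist ((List.sublist_append_right _ _).trans (List.sublist_append_left _ _))) hp
    have hcs₁ : (cs₁.map (total w)).sum ≤ (cs₁.map fun c => max (total w c) 0).sum :=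
      List.sum_le_sum fun c _ => le_max_left _ _
    have hcs₂ : 0 ≤ (cs₂.map fun c => max (total w c) 0).sum :=
      List.sum_nonneg fun _ hz => by
        obtain ⟨c, -, rfl⟩ := List.mem_map.1 hz
        exact le_max_right _ _
    rw [← (hperm.map _).sum_eq]
    simp only [List.map_append, List.map_cons, List.sum_append, List.sum_cons,
      sum_flatten_of_forall₂_isFrontier w hfs₁]
    linarith [le_max_right (total w d) 0]

theorem exists_border_pnode_le {cs : List (PQTree U)} (hp : Proper (pnode cs))
    (hnd : (leaves (pnode cs)).Nodup) :
    ∃ d ∈ cs, border w (pnode cs) ≤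
      border w d - max (total w d) 0 + (cs.map fun c => max (total w c) 0).sum := by
  obtain ⟨S, hS, hb⟩ := exists_borderCompatible_sum_eq_border w hp
  obtain ⟨hne, l₁, l₂, hf, rfl⟩ := borderCompatible_iff_exists_prefix.1 hS
  have hnd' := hf.perm_leaves.nodup_iff.2 hnd
  rw [hb, List.sum_toFinset w (hnd'.sublist (List.sublist_append_left _ _))]
  exact exists_sum_prefix_le_of_isFrontier_pnode w hf hnd'
    ((List.toFinset_nonempty_iff _).1 hne)

theorem sum_map_max_zero_eq_sum_filter {α M : Type*} [AddCommMonoid M] [LinearOrder M]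
    (f : α → M) (l : List α) :
    (l.map fun x => max (f x) 0).sum = ((l.filter fun x => 0 ≤ f x).map f).sum := by
  induction l with
  | nil => rfl
  | cons x l ih =>
    by_cases hx : 0 ≤ f x
    · simp [hx, ih]
    · simp [hx, ih, (not_le.1 hx).le]

theorem le_border_pnode {cs : List (PQTree U)} {d : PQTree U} (hd : d ∈ cs) (hpd : Proper d)
    (hnd : (leaves (pnode cs)).Nodup) :
    border w d - max (total w d) 0 + (cs.map fun c => max (total w c) 0).sum ≤
      border w (pnode cs) := by
  obtain ⟨S₀, hS₀, hb⟩ := exists_borderCompatible_sum_eq_border w hpd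
  obtain ⟨hne, p, q, hf, rfl⟩ := borderCompatible_iff_exists_prefix.1 hS₀
  obtain ⟨s, t, rfl⟩ := List.append_of_mem hd
  set pos := (s ++ t).filter fun c => 0 ≤ total w c
  set neg := (s ++ t).filter fun c => !decide (0 ≤ total w c)
  have hperm : (pos ++ d :: neg).Perm (s ++ d :: t) :=
    List.perm_middle.trans (((List.filter_append_perm _ _).cons d).trans List.perm_middle.symm)
  have hfront : IsFrontier (pnode (s ++ d :: t))
      (((pos.map leaves).flatten ++ p) ++ (q ++ (neg.map leaves).flatten)) := by
    simpa using IsFrontier.pnode _ _ _ hperm (List.rel_append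
      (forall₂_isFrontier_map_leaves pos) (.cons hf (forall₂_isFrontier_map_leaves neg)))
  have hnd' := (hfront.perm_leaves.nodup_iff.2 hnd).sublist (List.sublist_append_left _ _)
  have hS : BorderCompatible ((pos.map leaves).flatten ++ p).toFinset (pnode (s ++ d :: t)) :=
    ⟨(List.toFinset_nonempty_iff _).2
      (List.append_ne_nil_of_right_ne_nil _ ((List.toFinset_nonempty_iff _).1 hne)),
      _, _, _, hfront, rfl, Or.inl rfl⟩
  calc border w d - max (total w d) 0 + ((s ++ d :: t).map fun c => max (total w c) 0).sum
      = ∑ u ∈ p.toFinset, w u + (pos.map (total w)).sum := by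
        rw [(List.perm_middle.map _).sum_eq, List.map_cons, List.sum_cons,
          sum_map_max_zero_eq_sum_filter, ← hb]
        ring
    _ = (((pos.map leaves).flatten ++ p).map w).sum := by
        rw [List.sum_toFinset w (hnd'.sublist (List.sublist_append_right _ _)),
          List.map_append, List.sum_append,
          sum_flatten_of_forall₂_isFrontier w (forall₂_isFrontier_map_leaves pos), add_comm]
    _ = ∑ u ∈ ((pos.map leaves).flatten ++ p).toFinset, w u := (List.sum_toFinset w hnd').symm
    _ ≤ border w (pnode (s ++ d :: t)) := hS.sum_le_border w

end Weights

theorem border_pnode_general {U : Type} [DecidableEq U] (w : U → ℤ) (ℓ : ℕ)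
    (c : Fin ℓ → PQTree U) (hp : Proper (pnode (List.ofFn c)))
    (hnd : (leaves (pnode (List.ofFn c))).Nodup) :
    border w (pnode (List.ofFn c)) =
      sSup {z : ℤ | ∃ i : Fin ℓ, z = border w (c i) - max (total w (c i)) 0} +
        ∑ i : Fin ℓ, max (total w (c i)) 0 := by
  set G := {z : ℤ | ∃ i : Fin ℓ, z = border w (c i) - max (total w (c i)) 0}
  have hG : BddAbove G :=
    ((Set.finite_range _).subset (by rintro _ ⟨i, rfl⟩; exact ⟨i, rfl⟩)).bddAbove
  have hM : ∑ i : Fin ℓ, max (total w (c i)) 0 =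
      ((List.ofFn c).map fun t => max (total w t) 0).sum := by
    rw [List.map_ofFn, List.sum_ofFn]
    rfl
  obtain ⟨_, hi, hle⟩ := exists_border_pnode_le w hp hnd
  obtain ⟨i, rfl⟩ := List.mem_ofFn.1 hi
  apply le_antisymm
  · rw [hM]
    linarith [le_csSup hG ⟨i, rfl⟩]
  · rw [← le_sub_iff_add_le]
    refine csSup_le ⟨_, i, rfl⟩ ?_
    rintro _ ⟨j, rfl⟩
    have hj : c j ∈ List.ofFn c := List.mem_ofFn.2 ⟨j, rfl⟩
    rw [le_sub_iff_add_le, hM]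
    exact le_border_pnode w hj (hp.of_mem_pnode hj) hnd

/-- **Lemma: `border` at a p-node.** For a p-node `v` with children
`c_1, …, c_ℓ`, writing `g(c) = border(c) − max(total(c), 0)` and `b = max_i g(c_i)`,
`border(v) = b + Σ_i max(total(c_i), 0)`. -/
theorem border_pnode {U : Type} [DecidableEq U] (w : U → ℤ) (ℓ : ℕ) (hℓ : 1 ≤ ℓ)
    (c : Fin ℓ → PQTree U) (hp : Proper (pnode (List.ofFn c)))
    (hnd : (leaves (pnode (List.ofFn c))).Nodup) :
    border w (pnode (List.ofFn c)) =
      sSup {z : ℤ | ∃ i : Fin ℓ, z = border w (c i) - max (total w (c i)) 0} +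
        ∑ i : Fin ℓ, max (total w (c i)) 0 :=
  border_pnode_general w ℓ c hp hnd

end PQTree
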